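/- Let (A,[·,·],·) be a finite-dimensional Poisson algebra over a field, let r ∈ A⊗A be a solution of the Poisson Yang–Baxter equation whose symmetric part is (ad,L)-invariant and with I_r = r₊ − r₋ a linear isomorphism, fix λ ≠ 0, and let P = −λ·r₊ ∘ I_r⁻¹ be the induced Rota–Baxter operator of weight λ with descendent Poisson algebra (A,[·,·]_P,·_P). Then the map −(1/λ)·I_r: A* → A is a Poisson algebra isomorphism from (A*,[·,·]_r,·_r) to (A,[·,·]_P,·_P); explicitly, −(1/λ)I_r([x*,y*]_r) = [−(1/λ)I_r(x*), −(1/λ)I_r(y*)]_P and −(1/λ)I_r(x*·_r y*) = (−(1/λ)I_r(x*))·_P(−(1/λ)I_r(y*)) for all x*,y* ∈ A*. -/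

import Mathlib

open TensorProduct

section Preamble

variable {k A : Type*} [Field k] [AddCommGroup A] [Module k A]

/-- The Poisson algebra axioms for a pair of bilinear operations `br` (the Lie bracket)
and `mul` (the commutative associative product), including the Leibniz compatibility. -/
structure IsPoisson {k A : Type*} [Field k] [AddCommGroup A] [Module k A]
    (br mul : A →ₗ[k] A →ₗ[k] A) : Prop where
  antisymm : ∀ a b, br a b = - br b a
  jacobi : ∀ a b c, br a (br b c) = br (br a b) c + br b (br a c)
  comm : ∀ a b, mul a b = mul b a
  assoc : ∀ a b c, mul (mul a b) c = mul a (mul b c)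
  leibniz : ∀ a b c, br a (mul b c) = mul (br a b) c + mul b (br a c)

/-- `r ↦ r₊`, where `⟨r₊(x*), y*⟩ = ⟨r, x* ⊗ y*⟩`. -/
noncomputable def rPlus : (A ⊗[k] A) →ₗ[k] Module.Dual k A →ₗ[k] A :=
  TensorProduct.lift <| LinearMap.mk₂ k
    (fun a b => (Module.Dual.eval k A a).smulRight b)
    (fun a a' b => by ext f; simp [add_smul])
    (fun c a b => by ext f; simp [smul_smul])
    (fun a b b' => by ext f; simp)
    (fun c a b => by ext f; simp [smul_smul, mul_comm])

/-- The flip `τ : A ⊗ A → A ⊗ A`. -/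
noncomputable def tauT : (A ⊗[k] A) →ₗ[k] A ⊗[k] A := (TensorProduct.comm k A A).toLinearMap

/-- `r ↦ r₋`, where `⟨r₊(x*), y*⟩ = ⟨r, x* ⊗ y*⟩ = −⟨x*, r₋(y*)⟩`. -/
noncomputable def rMinus : (A ⊗[k] A) →ₗ[k] Module.Dual k A →ₗ[k] A :=
  - (rPlus ∘ₗ tauT)

@[simp] lemma rPlus_tmul (a b : A) (f : Module.Dual k A) :
    rPlus (a ⊗ₜ[k] b) f = f a • b := rfl

@[simp] lemma dualMap_add_apply (f g : A →ₗ[k] A) (y : Module.Dual k A) :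
    (f + g).dualMap y = f.dualMap y + g.dualMap y := by ext a; simp

@[simp] lemma dualMap_smul_apply (c : k) (f : A →ₗ[k] A) (y : Module.Dual k A) :
    (c • f).dualMap y = c • f.dualMap y := by ext a; simp

@[simp] lemma dualMap_neg_apply (f : A →ₗ[k] A) (y : Module.Dual k A) :
    (-f).dualMap y = - f.dualMap y := by ext a; simp

noncomputable def T1213 (m : A →ₗ[k] A →ₗ[k] A) :
    (A ⊗[k] A) ⊗[k] (A ⊗[k] A) →ₗ[k] A ⊗[k] (A ⊗[k] A) :=
  (TensorProduct.map (TensorProduct.lift m) LinearMap.id) ∘ₗ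
    (TensorProduct.tensorTensorTensorComm k A A A A).toLinearMap

noncomputable def T1323 (m : A →ₗ[k] A →ₗ[k] A) :
    (A ⊗[k] A) ⊗[k] (A ⊗[k] A) →ₗ[k] A ⊗[k] (A ⊗[k] A) :=
  (TensorProduct.assoc k A A A).toLinearMap ∘ₗ
    (TensorProduct.map LinearMap.id (TensorProduct.lift m)) ∘ₗ
    (TensorProduct.tensorTensorTensorComm k A A A A).toLinearMap

noncomputable def T2312 (m : A →ₗ[k] A →ₗ[k] A) :
    (A ⊗[k] A) ⊗[k] (A ⊗[k] A) →ₗ[k] A ⊗[k] (A ⊗[k] A) :=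
  (TensorProduct.leftComm k A A A).toLinearMap ∘ₗ
    (TensorProduct.map (TensorProduct.lift m ∘ₗ (TensorProduct.comm k A A).toLinearMap)
      LinearMap.id) ∘ₗ
    (TensorProduct.tensorTensorTensorComm k A A A A).toLinearMap ∘ₗ
    (TensorProduct.map (TensorProduct.comm k A A).toLinearMap LinearMap.id)

noncomputable def T1223 (m : A →ₗ[k] A →ₗ[k] A) :
    (A ⊗[k] A) ⊗[k] (A ⊗[k] A) →ₗ[k] A ⊗[k] (A ⊗[k] A) :=
  (TensorProduct.leftComm k A A A).toLinearMap ∘ₗ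
    (TensorProduct.map (TensorProduct.lift m) LinearMap.id) ∘ₗ
    (TensorProduct.tensorTensorTensorComm k A A A A).toLinearMap ∘ₗ
    (TensorProduct.map (TensorProduct.comm k A A).toLinearMap LinearMap.id)

/-- `C(r) = [r₁₂,r₁₃] + [r₁₃,r₂₃] + [r₁₂,r₂₃]` for the bracket `br`. -/
noncomputable def cybe (br : A →ₗ[k] A →ₗ[k] A) (r : A ⊗[k] A) : A ⊗[k] (A ⊗[k] A) :=
  T1213 br (r ⊗ₜ[k] r) + T1323 br (r ⊗ₜ[k] r) + T1223 br (r ⊗ₜ[k] r)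

/-- `A(r) = r₁₂·r₁₃ + r₁₃·r₂₃ − r₂₃·r₁₂` for the product `mul`. -/
noncomputable def aybe (mul : A →ₗ[k] A →ₗ[k] A) (r : A ⊗[k] A) : A ⊗[k] (A ⊗[k] A) :=
  T1213 mul (r ⊗ₜ[k] r) + T1323 mul (r ⊗ₜ[k] r) - T2312 mul (r ⊗ₜ[k] r)

/-- `r` is a solution of the Poisson Yang–Baxter equation: `C(r) = 0` and `A(r) = 0`. -/
def IsPYBESolution (br mul : A →ₗ[k] A →ₗ[k] A) (r : A ⊗[k] A) : Prop :=
  cybe br r = 0 ∧ aybe mul r = 0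

variable (k A) in
/-- `σ₁₃ : a ⊗ b ⊗ c ↦ c ⊗ b ⊗ a`. -/
noncomputable def sigma13 : A ⊗[k] (A ⊗[k] A) →ₗ[k] A ⊗[k] (A ⊗[k] A) :=
  (TensorProduct.map LinearMap.id (TensorProduct.comm k A A).toLinearMap) ∘ₗ
    (TensorProduct.leftComm k A A A).toLinearMap ∘ₗ
    (TensorProduct.map LinearMap.id (TensorProduct.comm k A A).toLinearMap)

/-- `s ∈ A ⊗ A` is `(ad, L)`-invariant:
`(ad(a)⊗id + id⊗ad(a))(s) = 0` and `(L(a)⊗id − id⊗L(a))(s) = 0` for all `a`. -/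
def IsAdLInvariant (br mul : A →ₗ[k] A →ₗ[k] A) (s : A ⊗[k] A) : Prop :=
  ∀ a : A,
    TensorProduct.map (br a) LinearMap.id s + TensorProduct.map LinearMap.id (br a) s = 0 ∧
    TensorProduct.map (mul a) LinearMap.id s - TensorProduct.map LinearMap.id (mul a) s = 0

/-- The bracket `[x*,y*]_r = −ad*(r₊(x*))y* + ad*(r₋(y*))x*` on the dual space. -/
noncomputable def dualBr (br : A →ₗ[k] A →ₗ[k] A) (r : A ⊗[k] A) :
    Module.Dual k A →ₗ[k] Module.Dual k A →ₗ[k] Module.Dual k A :=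
  LinearMap.mk₂ k
    (fun x y => - (br (rPlus r x)).dualMap y + (br (rMinus r y)).dualMap x)
    (fun x x' y => by simp [map_add]; try abel)
    (fun c x y => by simp [map_smul, smul_add]; try abel)
    (fun x y y' => by simp [map_add]; try abel)
    (fun c x y => by simp [map_smul, smul_add]; try abel)

/-- The product `x*·_r y* = L*(r₊(x*))y* + L*(r₋(y*))x*` on the dual space. -/
noncomputable def dualMul (mul : A →ₗ[k] A →ₗ[k] A) (r : A ⊗[k] A) :
    Module.Dual k A →ₗ[k] Module.Dual k A →ₗ[k] Module.Dual k A :=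
  LinearMap.mk₂ k
    (fun x y => (mul (rPlus r x)).dualMap y + (mul (rMinus r y)).dualMap x)
    (fun x x' y => by simp [map_add]; try abel)
    (fun c x y => by simp [map_smul, smul_add]; try abel)
    (fun x y y' => by simp [map_add]; try abel)
    (fun c x y => by simp [map_smul, smul_add]; try abel)

/-- The descendent operation `a ∘_P b = (P a) ∘ b + a ∘ (P b) + λ a ∘ b`. -/
noncomputable def descOp (m : A →ₗ[k] A →ₗ[k] A) (lam : k) (P : A →ₗ[k] A) :
    A →ₗ[k] A →ₗ[k] A :=
  LinearMap.mk₂ k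
    (fun a b => m (P a) b + m a (P b) + lam • m a b)
    (fun a a' b => by simp [map_add, smul_add]; try abel)
    (fun c a b => by simp [map_smul, smul_add, smul_smul, mul_comm]; try abel)
    (fun a b b' => by simp [map_add, smul_add]; try abel)
    (fun c a b => by simp [map_smul, smul_add, smul_smul, mul_comm]; try abel)

/-- `P` is a Rota–Baxter operator of weight `λ` on the Poisson algebra `(A, br, mul)`. -/
def IsRotaBaxter (br mul : A →ₗ[k] A →ₗ[k] A) (lam : k) (P : A →ₗ[k] A) : Prop :=
  (∀ a b, br (P a) (P b) = P (br (P a) b + br a (P b) + lam • br a b)) ∧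
  (∀ a b, mul (P a) (P b) = P (mul (P a) b + mul a (P b) + lam • mul a b))

/-- `((A, br, mul), B, P)` is a quadratic Rota–Baxter Poisson algebra of weight `λ`. -/
structure IsQuadraticRotaBaxter {k A : Type*} [Field k] [AddCommGroup A] [Module k A]
    (br mul : A →ₗ[k] A →ₗ[k] A) (B : A →ₗ[k] A →ₗ[k] k) (lam : k) (P : A →ₗ[k] A) :
    Prop where
  poisson : IsPoisson br mul
  symm : ∀ a b, B a b = B b a
  nondeg : ∀ a, (∀ b, B a b = 0) → a = 0
  br_invariant : ∀ a b c, B (br a b) c = B a (br b c)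
  mul_invariant : ∀ a b c, B (mul a b) c = B a (mul b c)
  rb : IsRotaBaxter br mul lam P
  compat : ∀ a b, B a (P b) + B (P a) b + lam • B a b = 0

/-- The semidirect-product bracket on `A ⊕ A*`:
`[(a,x*),(b,y*)] = ([a,b], −ad*(a)y* + ad*(b)x*)`. -/
noncomputable def sdBr (br : A →ₗ[k] A →ₗ[k] A) :
    (A × Module.Dual k A) →ₗ[k] (A × Module.Dual k A) →ₗ[k] (A × Module.Dual k A) :=
  LinearMap.mk₂ k
    (fun p q => (br p.1 q.1, - (br p.1).dualMap q.2 + (br q.1).dualMap p.2))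
    (fun p p' q => by simp [Prod.ext_iff, map_add]; try abel)
    (fun c p q => by simp [Prod.ext_iff, map_smul, smul_add]; try abel)
    (fun p q q' => by simp [Prod.ext_iff, map_add]; try abel)
    (fun c p q => by simp [Prod.ext_iff, map_smul, smul_add]; try abel)

/-- The semidirect-product multiplication on `A ⊕ A*`:
`(a,x*)·(b,y*) = (a·b, L*(a)y* + L*(b)x*)`. -/
noncomputable def sdMul (mul : A →ₗ[k] A →ₗ[k] A) :
    (A × Module.Dual k A) →ₗ[k] (A × Module.Dual k A) →ₗ[k] (A × Module.Dual k A) :=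
  LinearMap.mk₂ k
    (fun p q => (mul p.1 q.1, (mul p.1).dualMap q.2 + (mul q.1).dualMap p.2))
    (fun p p' q => by simp [Prod.ext_iff, map_add]; try abel)
    (fun c p q => by simp [Prod.ext_iff, map_smul, smul_add]; try abel)
    (fun p q q' => by simp [Prod.ext_iff, map_add]; try abel)
    (fun c p q => by simp [Prod.ext_iff, map_smul, smul_add]; try abel)

/-- The canonical bilinear form `𝔅_d((a,x*),(b,y*)) = ⟨a,y*⟩ + ⟨b,x*⟩` on `A ⊕ A*`. -/
noncomputable def sdForm :
    (A × Module.Dual k A) →ₗ[k] (A × Module.Dual k A) →ₗ[k] k :=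
  LinearMap.mk₂ k
    (fun p q => q.2 p.1 + p.2 q.1)
    (fun p p' q => by simp; try ring)
    (fun c p q => by simp [smul_add, smul_smul]; try ring)
    (fun p q q' => by simp; try ring)
    (fun c p q => by simp [smul_add, smul_smul]; try ring)

end Preamble

/-!
Since `r₋ = −(τ r)₊`, the map `I_r = r₊ − r₋ = (r + τ r)₊` is twice the contraction `S₊` with
the symmetric part. The `(ad, L)`-invariance of `S` says precisely that `S₊` intertwines the
coadjoint actions on `A*` with the adjoint ones on `A`: `S₊(ad*(a) ξ) = −[a, S₊ ξ]` and
`S₊(L*(a) ξ) = a · S₊ ξ`. Applying `I_r` to the defining formulas of `[·,·]_r` and `·_r` thus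
gives `[r₊ x, I_r y] − [r₋ y, I_r x]` and `r₊ x · I_r y + r₋ y · I_r x`. As
`P(−λ⁻¹ I_r x) = r₊ x` and `r₋ = r₊ − I_r`, these are `−λ` times the descendent operations
evaluated at `−λ⁻¹ I_r x` and `−λ⁻¹ I_r y`.
-/

section FactorizableRMatrix

variable {k A : Type*} [Field k] [AddCommGroup A] [Module k A]

lemma rPlus_map_left (g : A →ₗ[k] A) (t : A ⊗[k] A) (y : Module.Dual k A) :
    rPlus (TensorProduct.map g LinearMap.id t) y = rPlus t (g.dualMap y) := by
  induction t using TensorProduct.induction_on with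
  | zero => simp
  | tmul a b => simp
  | add u v hu hv => simp [map_add, hu, hv]

lemma rPlus_map_right (f : A →ₗ[k] A) (t : A ⊗[k] A) (y : Module.Dual k A) :
    rPlus (TensorProduct.map LinearMap.id f t) y = f (rPlus t y) := by
  induction t using TensorProduct.induction_on with
  | zero => simp
  | tmul a b => simp
  | add u v hu hv => simp [map_add, hu, hv]

lemma rPlus_sub_rMinus (r : A ⊗[k] A) : rPlus r - rMinus r = rPlus (r + tauT r) := by
  simp [rMinus, sub_eq_add_neg]

lemma rPlus_sub_rMinus_of_eq_add (r S Lam : A ⊗[k] A) (hdec : r = S + Lam)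
    (hS : tauT S = S) (hLam : tauT Lam = -Lam) (z : Module.Dual k A) :
    rPlus r z - rMinus r z = (2 : k) • rPlus S z := by
  have hsymm : r + tauT r = S + S := by
    rw [hdec, map_add, hS, hLam]
    abel
  rw [← LinearMap.sub_apply, rPlus_sub_rMinus, hsymm, map_add, two_smul]
  rfl

namespace IsAdLInvariant

variable {br mul : A →ₗ[k] A →ₗ[k] A} {s : A ⊗[k] A}

lemma rPlus_dualMap_br (h : IsAdLInvariant br mul s) (a : A) (y : Module.Dual k A) :
    rPlus s ((br a).dualMap y) = -br a (rPlus s y) := by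
  have := congrArg (rPlus · y) (h a).1
  simp only [map_add, LinearMap.add_apply, map_zero, LinearMap.zero_apply, rPlus_map_left,
    rPlus_map_right] at this
  exact eq_neg_of_add_eq_zero_left this

lemma rPlus_dualMap_mul (h : IsAdLInvariant br mul s) (a : A) (y : Module.Dual k A) :
    rPlus s ((mul a).dualMap y) = mul a (rPlus s y) := by
  have := congrArg (rPlus · y) (h a).2
  simp only [map_sub, LinearMap.sub_apply, map_zero, LinearMap.zero_apply, rPlus_map_left,
    rPlus_map_right] at this
  exact sub_eq_zero.mp this

end IsAdLInvariant

variable {br mul : A →ₗ[k] A →ₗ[k] A} {r : A ⊗[k] A} {J : Module.Dual k A →ₗ[k] A}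

lemma apply_dualBr_of_dualMap (hJ : ∀ a y, J ((br a).dualMap y) = -br a (J y))
    (x y : Module.Dual k A) :
    J (dualBr br r x y) = br (rPlus r x) (J y) - br (rMinus r y) (J x) := by
  simp only [dualBr, LinearMap.mk₂_apply, map_add, map_neg, hJ, neg_neg]
  abel

lemma apply_dualMul_of_dualMap (hJ : ∀ a y, J ((mul a).dualMap y) = mul a (J y))
    (x y : Module.Dual k A) :
    J (dualMul mul r x y) = mul (rPlus r x) (J y) + mul (rMinus r y) (J x) := by
  simp only [dualMul, LinearMap.mk₂_apply, map_add, hJ]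

end FactorizableRMatrix

section Descendent

variable {k A : Type*} [Field k] [AddCommGroup A] [Module k A]

lemma descOp_neg_inv_smul (m : A →ₗ[k] A →ₗ[k] A) {lam : k} (hlam : lam ≠ 0)
    (P : A →ₗ[k] A) (a b : A) :
    descOp m lam P (-(lam⁻¹ • a)) (-(lam⁻¹ • b)) =
      -(lam⁻¹ • (m (P (-(lam⁻¹ • a))) b + m a (P (-(lam⁻¹ • b))) - m a b)) := by
  simp only [descOp, LinearMap.mk₂_apply, map_neg, map_smul, LinearMap.neg_apply,
    LinearMap.smul_apply, smul_neg, neg_neg, smul_smul]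
  match_scalars <;> field_simp

lemma smul_comp_symm_apply_neg_inv_smul {M : Type*} [AddCommGroup M] [Module k M]
    (f : M →ₗ[k] A) (e : M ≃ₗ[k] A) {lam : k} (hlam : lam ≠ 0) (x : M) :
    ((-lam) • (f ∘ₗ e.symm.toLinearMap)) (-(lam⁻¹ • e x)) = f x := by
  simp [smul_smul, hlam]

end Descendent

theorem statement17_general {k A : Type*} [Field k] [AddCommGroup A] [Module k A]
    (br mul : A →ₗ[k] A →ₗ[k] A) (hP : IsPoisson br mul)
    (r S Lam : A ⊗[k] A) (hdec : r = S + Lam) (hS : tauT S = S) (hLam : tauT Lam = - Lam)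
    (hinv : IsAdLInvariant br mul S)
    (Ir : Module.Dual k A ≃ₗ[k] A) (hIr : ∀ x, Ir x = rPlus r x - rMinus r x)
    (lam : k) (hlam : lam ≠ 0) :
    Function.Bijective (fun x : Module.Dual k A => -(lam⁻¹ • Ir x)) ∧
    (∀ x y : Module.Dual k A,
      -(lam⁻¹ • Ir (dualBr br r x y)) =
        descOp br lam ((-lam) • ((rPlus r) ∘ₗ Ir.symm.toLinearMap))
          (-(lam⁻¹ • Ir x)) (-(lam⁻¹ • Ir y)) ∧
      -(lam⁻¹ • Ir (dualMul mul r x y)) =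
        descOp mul lam ((-lam) • ((rPlus r) ∘ₗ Ir.symm.toLinearMap))
          (-(lam⁻¹ • Ir x)) (-(lam⁻¹ • Ir y))) := by
  have hIrS (z) : Ir z = (2 : k) • rPlus S z :=
    (hIr z).trans (rPlus_sub_rMinus_of_eq_add r S Lam hdec hS hLam z)
  have hminus (z) : rMinus r z = rPlus r z - Ir z := by rw [hIr]; abel
  have hbr (a y) : Ir.toLinearMap ((br a).dualMap y) = -br a (Ir y) := by
    simp [hIrS, hinv.rPlus_dualMap_br]
  have hmul (a y) : Ir.toLinearMap ((mul a).dualMap y) = mul a (Ir y) := by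
    simp [hIrS, hinv.rPlus_dualMap_mul]
  refine ⟨?_, fun x y ↦ ⟨?_, ?_⟩⟩
  · convert (Ir.trans (.smulOfNeZero k A _ (neg_ne_zero.mpr (inv_ne_zero hlam)))).bijective using 1
    funext x
    simp
  all_goals
    rw [descOp_neg_inv_smul _ hlam, smul_comp_symm_apply_neg_inv_smul _ _ hlam,
      smul_comp_symm_apply_neg_inv_smul _ _ hlam]
  · rw [show Ir _ = _ from apply_dualBr_of_dualMap hbr x y]
    simp only [LinearEquiv.coe_coe, hminus, map_sub, LinearMap.sub_apply, hP.antisymm (rPlus r y),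
      hP.antisymm (Ir y) (Ir x)]
    abel_nf
  · rw [show Ir _ = _ from apply_dualMul_of_dualMap hmul x y]
    simp only [LinearEquiv.coe_coe, hminus, map_sub, LinearMap.sub_apply, hP.comm (rPlus r y),
      hP.comm (Ir y) (Ir x)]
    abel_nf

/-- for a factorizable Poisson bialgebra with induced Rota–Baxter operator
`P = −λ·r₊ ∘ I_r⁻¹` of weight `λ ≠ 0`, the map `−(1/λ)·I_r : A* → A` is a Poisson algebra
isomorphism from `(A*, [·,·]_r, ·_r)` to the descendent Poisson algebra
`(A, [·,·]_P, ·_P)`. -/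
theorem statement17 {k A : Type*} [Field k] [AddCommGroup A] [Module k A]
    [FiniteDimensional k A]
    (br mul : A →ₗ[k] A →ₗ[k] A) (hP : IsPoisson br mul)
    (r S Lam : A ⊗[k] A) (hdec : r = S + Lam) (hS : tauT S = S) (hLam : tauT Lam = - Lam)
    (hr : IsPYBESolution br mul r) (hinv : IsAdLInvariant br mul S)
    (Ir : Module.Dual k A ≃ₗ[k] A) (hIr : ∀ x, Ir x = rPlus r x - rMinus r x)
    (lam : k) (hlam : lam ≠ 0) :
    Function.Bijective (fun x : Module.Dual k A => -(lam⁻¹ • Ir x)) ∧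
    (∀ x y : Module.Dual k A,
      -(lam⁻¹ • Ir (dualBr br r x y)) =
        descOp br lam ((-lam) • ((rPlus r) ∘ₗ Ir.symm.toLinearMap))
          (-(lam⁻¹ • Ir x)) (-(lam⁻¹ • Ir y)) ∧
      -(lam⁻¹ • Ir (dualMul mul r x y)) =
        descOp mul lam ((-lam) • ((rPlus r) ∘ₗ Ir.symm.toLinearMap))
          (-(lam⁻¹ • Ir x)) (-(lam⁻¹ • Ir y))) :=
  statement17_general br mul hP r S Lam hdec hS hLam hinv Ir hIr lam hlam
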